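/- arXiv:0803.4386 — 5 statements merged into one kernel-verified Lean document; each statement's English description precedes it below -/
import Mathlib

section
/- For every positive integer n, the alternating sum over all connected (simple, labelled) graphs G on vertex set {1,...,n} of (-1)^{e(G)}, where e(G) is the number of edges of G, equals (-1)^{n-1} (n-1)!. -/
open scoped Classical

/-- The number of edges of a simple graph on a finite vertex type. -/
noncomputable def edgeCount {V : Type*} [Fintype V] (G : SimpleGraph V) : ℕ :=
  G.edgeSet.toFinite.toFinset.card

/-!
Fix a vertex `u` and sort the graphs on `V` by the set `T` of vertices that are not reachable
from `u`. Toggling one edge changes the sign, so the signed count of all graphs on `V` vanishes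
once `|V| ≥ 2`, and so does the signed count of every class with `|T| ≥ 2`: toggling an edge
between two vertices of `T` does not change `T`. The class `T = ∅` consists of the connected
graphs, and the class `T = {v}` of the connected graphs on `V \ {v}` with `v` added as an isolated
vertex. Writing `c(n)` for the signed count of connected graphs on `n` vertices, this gives
`c(n) + (n - 1) c(n - 1) = 0` for `n ≥ 2`, while `c(1) = 1`.
-/

open Finset
open scoped symmDiff

namespace SimpleGraph

section Reachability

variable {V : Type*} {G H : SimpleGraph V} {a b u z : V}

lemma edge_ne_bot (hab : a ≠ b) : edge a b ≠ ⊥ :=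
  (by simpa using lt_sup_edge ⊥ a b hab id : ⊥ < edge a b).ne'

lemma Reachable.of_le_sup_edge (hH : H ≤ G ⊔ edge a b) (ha : ¬G.Reachable u a)
    (hb : ¬G.Reachable u b) (h : H.Reachable u z) : G.Reachable u z := by
  by_contra hz
  obtain ⟨p⟩ := h
  obtain ⟨d, -, hd, hd'⟩ := p.exists_boundary_dart {z | G.Reachable u z} Reachable.rfl hz
  rcases hH d.adj with hG | he
  · exact hd' (hd.trans hG.reachable)
  · rw [edge_adj] at he
    rcases he.1 with ⟨h1, -⟩ | ⟨h1, -⟩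
    · exact ha (h1 ▸ hd)
    · exact hb (h1 ▸ hd)

lemma reachable_symmDiff_edge_iff (ha : ¬G.Reachable u a) (hb : ¬G.Reachable u b) :
    (G ∆ edge a b).Reachable u z ↔ G.Reachable u z := by
  have hle : G ∆ edge a b ≤ G ⊔ edge a b := symmDiff_le_sup
  refine ⟨Reachable.of_le_sup_edge hle ha hb, Reachable.of_le_sup_edge
    (le_symmDiff_sup_right G _) ?_ ?_⟩
  · exact fun h => ha (h.of_le_sup_edge hle ha hb)
  · exact fun h => hb (h.of_le_sup_edge hle ha hb)

end Reachability

variable {V : Type*} [Fintype V] {G : SimpleGraph V} {a b u v : V}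

section EdgeCount

lemma edgeCount_eq_card_edgeFinset (G : SimpleGraph V) : edgeCount G = #G.edgeFinset := by
  simp [edgeCount, edgeFinset]

lemma edgeCount_spanningCoe {s : Set V} (H : SimpleGraph s) :
    edgeCount H.spanningCoe = edgeCount H := by
  simp only [edgeCount_eq_card_edgeFinset]
  convert card_edgeFinset_map (Function.Embedding.subtype _) H

lemma neg_one_pow_edgeCount_sup_edge (hab : a ≠ b) (h : ¬G.Adj a b) :
    (-1 : ℤ) ^ edgeCount (G ⊔ edge a b) = -(-1) ^ edgeCount G := by
  have hcard : edgeCount (G ⊔ edge a b) = edgeCount G + 1 := by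
    simp only [edgeCount_eq_card_edgeFinset]
    convert card_edgeFinset_sup_edge G h hab
  rw [hcard, pow_succ, mul_neg_one]

lemma neg_one_pow_edgeCount_symmDiff_edge (hab : a ≠ b) (G : SimpleGraph V) :
    (-1 : ℤ) ^ edgeCount (G ∆ edge a b) = -(-1) ^ edgeCount G := by
  by_cases h : G.Adj a b
  · have hle : edge a b ≤ G := (edge_le_iff G).mpr (Or.inr h)
    rw [symmDiff_of_ge hle]
    conv_rhs => rw [← sdiff_sup_cancel hle]
    rw [neg_one_pow_edgeCount_sup_edge hab (by simp [edge_adj, hab]), neg_neg]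
  · rw [((disjoint_edge G).mpr h).symmDiff_eq_sup, neg_one_pow_edgeCount_sup_edge hab h]

lemma sum_neg_one_pow_edgeCount_eq_zero {s : Finset (SimpleGraph V)} (hab : a ≠ b)
    (hs : ∀ G ∈ s, G ∆ edge a b ∈ s) : ∑ G ∈ s, (-1 : ℤ) ^ edgeCount G = 0 :=
  sum_involution (fun G _ => G ∆ edge a b)
    (fun G _ => by rw [neg_one_pow_edgeCount_symmDiff_edge hab, add_neg_cancel])
    (fun G _ _ => by simpa [symmDiff_eq_left] using edge_ne_bot hab) hs
    (fun G _ => symmDiff_symmDiff_cancel_right _ _)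

end EdgeCount

noncomputable def connectedSignSum (V : Type*) [Fintype V] : ℤ :=
  ∑ G : SimpleGraph V with G.Connected, (-1 : ℤ) ^ edgeCount G

noncomputable def unreachableFinset (u : V) (G : SimpleGraph V) : Finset V :=
  {z | ¬G.Reachable u z}

lemma mem_unreachableFinset {z : V} : z ∈ unreachableFinset u G ↔ ¬G.Reachable u z := by
  simp [unreachableFinset]

lemma self_notMem_unreachableFinset : u ∉ unreachableFinset u G := by
  simp [mem_unreachableFinset]

lemma unreachableFinset_eq_empty_iff : unreachableFinset u G = ∅ ↔ G.Connected := by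
  simp only [eq_empty_iff_forall_notMem, mem_unreachableFinset, not_not]
  exact ⟨fun h => (connected_iff_exists_forall_reachable _).mpr ⟨u, h⟩,
    fun h z => h.preconnected u z⟩

lemma unreachableFinset_eq_singleton_iff :
    unreachableFinset u G = {v} ↔ ∀ z, G.Reachable u z ↔ z ≠ v := by
  simp only [Finset.ext_iff, mem_unreachableFinset, mem_singleton]
  exact forall_congr' fun z => by tauto

lemma unreachableFinset_symmDiff_edge (ha : a ∈ unreachableFinset u G)
    (hb : b ∈ unreachableFinset u G) :
    unreachableFinset u (G ∆ edge a b) = unreachableFinset u G := by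
  rw [mem_unreachableFinset] at ha hb
  ext z
  simp only [mem_unreachableFinset, reachable_symmDiff_edge_iff ha hb]

lemma sum_unreachableFinset_eq_zero {T : Finset V} (hT : 1 < #T) :
    ∑ G with unreachableFinset u G = T, (-1 : ℤ) ^ edgeCount G = 0 := by
  obtain ⟨a, ha, b, hb, hab⟩ := one_lt_card.mp hT
  refine sum_neg_one_pow_edgeCount_eq_zero hab fun G hG => ?_
  rw [mem_filter] at hG ⊢
  rw [← hG.2] at ha hb
  exact ⟨mem_univ _, (unreachableFinset_symmDiff_edge ha hb).trans hG.2⟩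

lemma notMem_support_of_unreachableFinset_eq_singleton (h : unreachableFinset u G = {v}) :
    v ∉ G.support := by
  rw [unreachableFinset_eq_singleton_iff] at h
  rintro ⟨w, hvw⟩
  exact (h v).mp (((h w).mpr hvw.ne.symm).trans hvw.symm.reachable) rfl

lemma connected_induce_of_unreachableFinset_eq_singleton (huv : u ≠ v)
    (h : unreachableFinset u G = {v}) : (G.induce {v}ᶜ).Connected := by
  rw [unreachableFinset_eq_singleton_iff] at h
  refine (connected_iff_exists_forall_reachable _).mpr ⟨⟨u, huv⟩, fun ⟨z, hz⟩ => ?_⟩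
  obtain ⟨p⟩ := (h z).mpr hz
  exact (p.induce {v}ᶜ fun x hx => (h x).mp ⟨p.takeUntil x hx⟩).reachable

lemma unreachableFinset_spanningCoe_of_connected (huv : u ≠ v)
    {H : SimpleGraph ({v}ᶜ : Set V)} (hH : H.Connected) :
    unreachableFinset u H.spanningCoe = {v} := by
  refine unreachableFinset_eq_singleton_iff.mpr fun z => ⟨?_, fun hz => ?_⟩
  · rintro hz rfl
    have hv := mem_support_of_reachable huv.symm hz.symm
    rw [support_spanningCoe] at hv
    obtain ⟨x, -, hx⟩ := hv
    exact x.2 hx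
  · exact (hH.preconnected ⟨u, huv⟩ ⟨z, hz⟩).map (Embedding.spanningCoe H).toHom

lemma sum_unreachableFinset_eq_singleton (huv : u ≠ v) :
    ∑ G with unreachableFinset u G = {v}, (-1 : ℤ) ^ edgeCount G =
      connectedSignSum ({v}ᶜ : Set V) := by
  unfold connectedSignSum
  refine (sum_nbij' spanningCoe (induce {v}ᶜ) (fun H hH => ?_) (fun G hG => ?_)
    (fun H _ => induce_spanningCoe) (fun G hG => ?_) (fun H _ => ?_)).symm
  · simp only [mem_filter, mem_univ, true_and] at hH ⊢
    exact unreachableFinset_spanningCoe_of_connected huv hH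
  · simp only [mem_filter, mem_univ, true_and] at hG ⊢
    exact connected_induce_of_unreachableFinset_eq_singleton huv hG
  · simp only [mem_filter, mem_univ, true_and] at hG
    have hv := notMem_support_of_unreachableFinset_eq_singleton hG
    exact (spanningCoe_induce_eq_self G _).mpr fun x hx hxv => hv (hxv ▸ hx)
  · -- `rfl` bridges two `Fintype` instances on `{v}ᶜ`
    rw [edgeCount_spanningCoe]
    rfl

theorem connectedSignSum_add_sum_compl_singleton (u : V) (hV : 1 < Fintype.card V) :
    connectedSignSum V + ∑ v ∈ univ.erase u, connectedSignSum ({v}ᶜ : Set V) = 0 := by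
  obtain ⟨a, b, hab⟩ := Fintype.exists_pair_of_one_lt_card hV
  set S : Finset V → ℤ := fun T => ∑ G with unreachableFinset u G = T, (-1 : ℤ) ^ edgeCount G
  have hsum : ∑ T, S T = 0 := by
    rw [sum_fiberwise]
    exact sum_neg_one_pow_edgeCount_eq_zero hab fun _ _ => mem_univ _
  have hS : ∀ T ∉ insert ∅ ((univ.erase u).map ⟨singleton, singleton_injective⟩), S T = 0 := by
    intro T hT
    obtain h | h | h : #T = 0 ∨ #T = 1 ∨ 1 < #T := by omega
    · simp_all
    · obtain ⟨w, rfl⟩ := card_eq_one.mp h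
      obtain rfl : w = u := by simpa using hT
      exact sum_eq_zero fun G hG =>
        absurd ((mem_filter.mp hG).2 ▸ mem_singleton_self w) self_notMem_unreachableFinset
    · exact sum_unreachableFinset_eq_zero h
  rw [← sum_subset (subset_univ _) fun T _ => hS T, sum_insert (by simp), sum_map] at hsum
  have hS₀ : S ∅ = connectedSignSum V := by
    simp only [S, unreachableFinset_eq_empty_iff]
    rfl
  have hS₁ : ∀ v ∈ univ.erase u, S {v} = connectedSignSum ({v}ᶜ : Set V) :=
    fun v hv => sum_unreachableFinset_eq_singleton (ne_of_mem_erase hv).symm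
  rwa [← hS₀, ← sum_congr rfl hS₁]

theorem connectedSignSum_of_card_eq_one (h : Fintype.card V = 1) : connectedSignSum V = 1 := by
  obtain ⟨x, hx⟩ := Fintype.card_eq_one_iff.mp h
  have : Unique V := ⟨⟨x⟩, hx⟩
  have hbot : (⊥ : SimpleGraph V).Connected :=
    (connected_iff_exists_forall_reachable _).mpr ⟨x, fun y => hx y ▸ Reachable.rfl⟩
  simp [connectedSignSum, Subsingleton.elim _ (⊥ : SimpleGraph V), hbot, edgeCount]

theorem connectedSignSum_of_card_eq_succ {n : ℕ} (hV : Fintype.card V = n + 1) :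
    connectedSignSum V = (-1) ^ n * n.factorial := by
  induction n generalizing V with
  | zero => simpa using connectedSignSum_of_card_eq_one hV
  | succ n ih =>
    obtain ⟨u⟩ : Nonempty V := Fintype.card_pos_iff.mp (by omega)
    have hcompl : ∀ v ∈ univ.erase u, connectedSignSum ({v}ᶜ : Set V) = (-1) ^ n * n.factorial :=
      fun v _ => ih (by simp [filter_ne', hV])
    have hrec := connectedSignSum_add_sum_compl_singleton u (by omega)
    rw [sum_congr rfl hcompl, sum_const, card_erase_of_mem (mem_univ u), card_univ, hV] at hrec
    rw [eq_neg_of_add_eq_zero_left hrec, Nat.factorial_succ]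
    push_cast
    ring

end SimpleGraph

/-- For every positive integer `n`, the alternating sum of `(-1)^{e(G)}` over all
connected simple labelled graphs `G` on `n` vertices equals `(-1)^(n-1) * (n-1)!`. -/
theorem alternating_sum_connected_graphs (n : ℕ) (hn : 1 ≤ n) :
    ∑ G ∈ Finset.univ.filter (fun G : SimpleGraph (Fin n) => G.Connected),
      (-1 : ℤ) ^ edgeCount G = (-1) ^ (n - 1) * (n - 1).factorial := by
  obtain ⟨m, rfl⟩ : ∃ m, n = m + 1 := ⟨n - 1, by omega⟩
  rw [Nat.add_sub_cancel, ← SimpleGraph.connectedSignSum_of_card_eq_succ (Fintype.card_fin _)]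
  unfold SimpleGraph.connectedSignSum
  -- the two sums differ only in the decidable equality on `Fin (m + 1)` behind `Finset.univ`
  convert rfl
end

section
/- For every positive integer n and every q ≥ 0 and real number u, the sum over all functions c : [n] → [q] of u^{δ(c)}, where δ(c) is the number of pairs 1 ≤ i < j ≤ n with c(i) = c(j), equals the sum over all graphs G on vertex set [n] of q^{c(G)} (u-1)^{e(G)}, where c(G) is the number of connected components and e(G) the number of edges of G. -/
open scoped Classical

open Finset

variable {n q : ℕ}

/-- ordered pairs i < j -/
private def pairsF (n : ℕ) : Finset (Fin n × Fin n) := univ.filter (fun p => p.1 < p.2)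

private def graphOf (S : Finset (Fin n × Fin n)) : SimpleGraph (Fin n) :=
  SimpleGraph.fromRel (fun i j => (i, j) ∈ S)

private lemma graphOf_adj (S : Finset (Fin n × Fin n)) (a b : Fin n) :
    (graphOf S).Adj a b ↔ a ≠ b ∧ ((a, b) ∈ S ∨ (b, a) ∈ S) :=
  SimpleGraph.fromRel_adj _ a b

private noncomputable def finsetOf (G : SimpleGraph (Fin n)) : Finset (Fin n × Fin n) :=
  univ.filter (fun p => p.1 < p.2 ∧ G.Adj p.1 p.2)

private lemma finsetOf_graphOf {S : Finset (Fin n × Fin n)} (hS : S ∈ (pairsF n).powerset) :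
    finsetOf (graphOf S) = S := by
  rw [mem_powerset] at hS
  ext p
  simp only [finsetOf, mem_filter, mem_univ, true_and, graphOf_adj]
  constructor
  · rintro ⟨hlt, -, h | h⟩
    · exact h
    · exact absurd hlt (asymm ((mem_filter.1 (hS h)).2))
  · intro hp
    have hlt : p.1 < p.2 := (mem_filter.1 (hS hp)).2
    exact ⟨hlt, hlt.ne, Or.inl (by simpa using hp)⟩

private lemma graphOf_finsetOf (G : SimpleGraph (Fin n)) : graphOf (finsetOf G) = G := by
  ext a b
  simp only [graphOf_adj, finsetOf, mem_filter, mem_univ, true_and]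
  constructor
  · rintro ⟨-, ⟨-, h⟩ | ⟨-, h⟩⟩
    · exact h
    · exact h.symm
  · intro h
    rcases lt_or_gt_of_ne h.ne with hlt | hlt
    · exact ⟨h.ne, Or.inl ⟨hlt, h⟩⟩
    · exact ⟨h.ne, Or.inr ⟨hlt, h.symm⟩⟩

private lemma edgeCount_graphOf {S : Finset (Fin n × Fin n)} (hS : S ∈ (pairsF n).powerset) :
    edgeCount (graphOf S) = S.card := by
  rw [mem_powerset] at hS
  have hlt : ∀ p ∈ S, p.1 < p.2 := fun p hp => (mem_filter.1 (hS hp)).2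
  have himg : (graphOf S).edgeSet.toFinite.toFinset = S.image (fun p => s(p.1, p.2)) := by
    ext e
    induction e using Sym2.ind with
    | _ a b =>
      simp only [Set.Finite.mem_toFinset, SimpleGraph.mem_edgeSet, graphOf_adj, mem_image]
      constructor
      · rintro ⟨hne, h | h⟩
        · exact ⟨(a, b), h, rfl⟩
        · exact ⟨(b, a), h, Sym2.eq_swap⟩
      · rintro ⟨p, hp, he⟩
        rw [Sym2.eq_iff] at he
        rcases he with ⟨h1, h2⟩ | ⟨h1, h2⟩
        · subst h1; subst h2; exact ⟨(hlt p hp).ne, Or.inl (by simpa using hp)⟩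
        · subst h1; subst h2; exact ⟨(hlt p hp).ne.symm, Or.inr (by simpa using hp)⟩
  rw [edgeCount, himg, card_image_of_injOn]
  intro p hp p' hp' he
  rw [Sym2.eq_iff] at he
  rcases he with ⟨h1, h2⟩ | ⟨h1, h2⟩
  · exact Prod.ext h1 h2
  · exact absurd (hlt p hp) (by rw [h1, h2]; exact asymm (hlt p' hp'))

private lemma card_colorings (G : SimpleGraph (Fin n)) (q : ℕ) :
    ((univ : Finset (Fin n → Fin q)).filter
        (fun c => ∀ i j, G.Adj i j → c i = c j)).card
      = q ^ Fintype.card G.ConnectedComponent := by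
  have walkconst : ∀ (c : Fin n → Fin q), (∀ i j, G.Adj i j → c i = c j) →
      ∀ (v w : Fin n) (p : G.Walk v w), c v = c w := by
    intro c hc v w p
    induction p with
    | nil => rfl
    | cons h _ ih => exact (hc _ _ h).trans ih
  have e : {c : Fin n → Fin q // ∀ i j, G.Adj i j → c i = c j}
      ≃ (G.ConnectedComponent → Fin q) :=
    { toFun := fun c => SimpleGraph.ConnectedComponent.lift c.1
        (fun v w p _ => walkconst c.1 c.2 v w p)
      invFun := fun f => ⟨f ∘ G.connectedComponentMk,
        fun i j h => congrArg f (SimpleGraph.ConnectedComponent.connectedComponentMk_eq_of_adj h)⟩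
      left_inv := fun c => Subtype.ext rfl
      right_inv := fun f => by
        funext x
        induction x using SimpleGraph.ConnectedComponent.ind with
        | _ v => rfl }
  calc ((univ : Finset (Fin n → Fin q)).filter
        (fun c => ∀ i j, G.Adj i j → c i = c j)).card
      = Fintype.card {c : Fin n → Fin q // ∀ i j, G.Adj i j → c i = c j} :=
        (Fintype.card_subtype _).symm
    _ = Fintype.card (G.ConnectedComponent → Fin q) := Fintype.card_congr e
    _ = q ^ Fintype.card G.ConnectedComponent := by
        rw [Fintype.card_fun, Fintype.card_fin]

/-- Potts/Tutte identity on the complete graph: for `n ≥ 1`, `q ≥ 0`, and real `u`,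
`∑_{c : [n] → [q]} u^{δ(c)} = ∑_{G ⊆ K_n} q^{c(G)} (u-1)^{e(G)}`, where `δ(c)` is the
number of pairs `i < j` with `c i = c j`, `c(G)` the number of connected components and
`e(G)` the number of edges of `G`. -/
theorem potts_tutte_complete (n q : ℕ) (hn : 1 ≤ n) (u : ℝ) :
    ∑ c : Fin n → Fin q,
      u ^ (Finset.univ.filter
        (fun p : Fin n × Fin n => p.1 < p.2 ∧ c p.1 = c p.2)).card
    = ∑ G : SimpleGraph (Fin n),
        (q : ℝ) ^ Fintype.card G.ConnectedComponent * (u - 1) ^ edgeCount G := by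
  have step1 : ∀ c : Fin n → Fin q,
      u ^ (Finset.univ.filter
        (fun p : Fin n × Fin n => p.1 < p.2 ∧ c p.1 = c p.2)).card
      = ∏ p ∈ pairsF n, ((if c p.1 = c p.2 then u - 1 else 0) + 1) := by
    intro c
    have : (Finset.univ.filter (fun p : Fin n × Fin n => p.1 < p.2 ∧ c p.1 = c p.2))
        = (pairsF n).filter (fun p => c p.1 = c p.2) := by
      rw [pairsF, filter_filter]
    rw [this]
    rw [Finset.prod_congr rfl (fun p _ => by split_ifs with h <;> simp [h] : ∀ p ∈ pairsF n,
      ((if c p.1 = c p.2 then u - 1 else 0) + 1) = if c p.1 = c p.2 then u else 1)]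
    rw [Finset.prod_ite, Finset.prod_const, Finset.prod_const, one_pow, mul_one]
  calc ∑ c : Fin n → Fin q, u ^ (Finset.univ.filter
        (fun p : Fin n × Fin n => p.1 < p.2 ∧ c p.1 = c p.2)).card
      = ∑ c : Fin n → Fin q, ∑ S ∈ (pairsF n).powerset,
          ∏ p ∈ S, (if c p.1 = c p.2 then u - 1 else 0) := by
        refine Finset.sum_congr rfl fun c _ => ?_
        rw [step1 c, Finset.prod_add]
        refine Finset.sum_congr rfl fun S _ => ?_
        simp
    _ = ∑ S ∈ (pairsF n).powerset, ∑ c : Fin n → Fin q,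
          ∏ p ∈ S, (if c p.1 = c p.2 then u - 1 else 0) := Finset.sum_comm
    _ = ∑ S ∈ (pairsF n).powerset,
          (q : ℝ) ^ Fintype.card (graphOf S).ConnectedComponent * (u - 1) ^ S.card := by
        refine Finset.sum_congr rfl fun S hS => ?_
        have hprod : ∀ c : Fin n → Fin q,
            (∏ p ∈ S, (if c p.1 = c p.2 then u - 1 else 0))
            = if (∀ i j, (graphOf S).Adj i j → c i = c j) then (u - 1) ^ S.card else 0 := by
          intro c
          by_cases h : ∀ i j, (graphOf S).Adj i j → c i = c j
          · rw [if_pos h]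
            rw [Finset.prod_congr rfl (fun p hp => ?_), Finset.prod_const]
            have hlt : p.1 < p.2 := (mem_filter.1 ((mem_powerset.1 hS) hp)).2
            rw [if_pos (h _ _ ((graphOf_adj S p.1 p.2).2 ⟨hlt.ne, Or.inl hp⟩))]
          · rw [if_neg h]
            push_neg at h
            obtain ⟨i, j, hadj, hne⟩ := h
            rcases (graphOf_adj S i j).1 hadj with ⟨-, hij | hji⟩
            · exact Finset.prod_eq_zero hij (if_neg hne)
            · exact Finset.prod_eq_zero hji (if_neg (fun h => hne h.symm))
        rw [Finset.sum_congr rfl fun c _ => hprod c]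
        rw [Finset.sum_ite, Finset.sum_const, Finset.sum_const_zero, add_zero,
          nsmul_eq_mul, card_colorings]
        push_cast
        ring
    _ = ∑ G : SimpleGraph (Fin n),
          (q : ℝ) ^ Fintype.card G.ConnectedComponent * (u - 1) ^ edgeCount G := by
        refine Finset.sum_nbij' graphOf finsetOf ?_ ?_ ?_ ?_ ?_
        · intro S _; exact mem_univ _
        · intro G _
          simp only [mem_powerset, finsetOf]
          intro p hp
          exact mem_filter.2 ⟨mem_univ _, (mem_filter.1 hp).2.1⟩
        · intro S hS; exact finsetOf_graphOf hS
        · intro G _; exact graphOf_finsetOf G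
        · intro S hS
          rw [edgeCount_graphOf hS]
end

section
/- Let edges of K_n be ordered lexicographically: (i,j) < (k,l) iff min(i,j) < min(k,l), or min(i,j)=min(k,l) and max(i,j) < max(k,l). For a graph G on [n] and an edge e=(i,j) of K_n, say e is G-active if there is a path in G^{>e} (the spanning subgraph of G consisting of edges strictly greater than e) connecting i and j. Define Ψ(G) = G if no edge is G-active, and Ψ(G) = G ⊕ e*_G otherwise, where e*_G is the least G-active edge and ⊕ toggles membership of that edge. Then Ψ maps connected graphs to connected graphs and Ψ is an involution: Ψ(Ψ(G)) = G for every connected graph G on [n]. -/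
open scoped Classical

noncomputable section

/-- The lexicographic key of the edge `{a, b}` of the complete graph on `Fin n`:
the pair `(min a b, max a b)` with the lexicographic order. -/
def edgeKey {n : ℕ} (a b : Fin n) : Fin n ×ₗ Fin n := toLex (min a b, max a b)

/-- The spanning subgraph `G^{>e}` of `G` consisting of the edges strictly greater
than `e` in the lexicographic order. -/
def aboveEdge {n : ℕ} (G : SimpleGraph (Fin n)) (e : Fin n ×ₗ Fin n) :
    SimpleGraph (Fin n) where
  Adj a b := G.Adj a b ∧ e < edgeKey a b
  symm := by
    constructor
    intro a b hab
    refine ⟨hab.1.symm, ?_⟩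
    have : edgeKey a b = edgeKey b a := by
      unfold edgeKey; rw [min_comm a b, max_comm a b]
    rw [← this]; exact hab.2
  loopless := ⟨fun a ha => G.loopless.irrefl a ha.1⟩

/-- An edge `e = (i, j)` of `K_n` (with `i < j`) is `G`-active if `i` and `j` are joined
by a path in `G^{>e}`. -/
def IsActive {n : ℕ} (G : SimpleGraph (Fin n)) (e : Fin n ×ₗ Fin n) : Prop :=
  (ofLex e).1 < (ofLex e).2 ∧ (aboveEdge G e).Reachable (ofLex e).1 (ofLex e).2

instance {n : ℕ} : Fintype (Fin n ×ₗ Fin n) := Fintype.ofEquiv (Fin n × Fin n) toLex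

/-- The finset of `G`-active edges. -/
def activeEdges {n : ℕ} (G : SimpleGraph (Fin n)) : Finset (Fin n ×ₗ Fin n) :=
  Finset.univ.filter (IsActive G)

/-- `G ⊕ e`: toggle the edge `e` (delete it if present, add it otherwise). -/
def toggleEdge {n : ℕ} (G : SimpleGraph (Fin n)) (e : Fin n ×ₗ Fin n) :
    SimpleGraph (Fin n) :=
  if G.Adj (ofLex e).1 (ofLex e).2 then G.deleteEdges {s((ofLex e).1, (ofLex e).2)}
  else G ⊔ SimpleGraph.fromEdgeSet {s((ofLex e).1, (ofLex e).2)}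

/-- The map `Ψ`: toggle the least `G`-active edge, if any. -/
def Psi {n : ℕ} (G : SimpleGraph (Fin n)) : SimpleGraph (Fin n) :=
  if h : (activeEdges G).Nonempty then toggleEdge G ((activeEdges G).min' h) else G

end

/-!
Let `e` be the least `G`-active edge and `G' = G ⊕ e`. Toggling `e` does not change `G^{>e}`,
so `e` is `G'`-active; in particular its endpoints stay joined in `G'`, and `G'` is connected.
An edge `f < e` that is `G'`-active is `G`-active too: a path in `G'^{>f}` can use `e` only
where `G^{>f} ⊇ G^{>e}` has a detour between the endpoints of `e`. Hence `e` is also the least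
`G'`-active edge, and `Ψ(G') = G' ⊕ e = G`.
-/

namespace SimpleGraph

variable {V : Type*} {H K : SimpleGraph V} {s t u v : V}

lemma Reachable.of_le_sup_edge_s3 (hst : K.Reachable s t) (hle : H ≤ K ⊔ edge s t)
    (huv : H.Reachable u v) : K.Reachable u v := by
  rw [reachable_iff_reflTransGen] at huv ⊢
  refine huv.lift' id fun a b hab => (reachable_iff_reflTransGen a b).mp ?_
  rcases hle hab with hK | hedge
  · exact hK.reachable
  · obtain ⟨⟨rfl, rfl⟩ | ⟨rfl, rfl⟩, -⟩ := (edge_adj ..).mp hedge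
    exacts [hst, hst.symm]

end SimpleGraph

open SimpleGraph

section

variable {n : ℕ} {G G' : SimpleGraph (Fin n)} {e f : Fin n ×ₗ Fin n} {a b : Fin n}

lemma edgeKey_congr {c d : Fin n} (h : s(a, b) = s(c, d)) : edgeKey a b = edgeKey c d := by
  obtain ⟨rfl, rfl⟩ | ⟨rfl, rfl⟩ := Sym2.eq_iff.mp h
  · rfl
  · simp only [edgeKey, min_comm, max_comm]

lemma edgeKey_ofLex (hlt : (ofLex e).1 < (ofLex e).2) : edgeKey (ofLex e).1 (ofLex e).2 = e := by
  rw [edgeKey, min_eq_left hlt.le, max_eq_right hlt.le, Prod.mk.eta, toLex_ofLex]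

lemma toggleEdge_adj_of_ne (h : s(a, b) ≠ s((ofLex e).1, (ofLex e).2)) :
    (toggleEdge G e).Adj a b ↔ G.Adj a b := by
  unfold toggleEdge
  split_ifs <;> simp [h]

lemma toggleEdge_adj_self (hne : (ofLex e).1 ≠ (ofLex e).2) :
    (toggleEdge G e).Adj (ofLex e).1 (ofLex e).2 ↔ ¬G.Adj (ofLex e).1 (ofLex e).2 := by
  unfold toggleEdge
  split_ifs with h <;> simp [h, hne]

lemma toggleEdge_toggleEdge (hne : (ofLex e).1 ≠ (ofLex e).2) :
    toggleEdge (toggleEdge G e) e = G := by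
  ext a b
  by_cases h : s(a, b) = s((ofLex e).1, (ofLex e).2)
  · obtain ⟨rfl, rfl⟩ | ⟨rfl, rfl⟩ := Sym2.eq_iff.mp h
    · rw [toggleEdge_adj_self hne, toggleEdge_adj_self hne, not_not]
    · rw [adj_comm, adj_comm G, toggleEdge_adj_self hne, toggleEdge_adj_self hne, not_not]
  · rw [toggleEdge_adj_of_ne h, toggleEdge_adj_of_ne h]

lemma le_toggleEdge_sup_edge : G ≤ toggleEdge G e ⊔ edge (ofLex e).1 (ofLex e).2 := by
  intro a b hab
  by_cases h : s(a, b) = s((ofLex e).1, (ofLex e).2)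
  · exact Or.inr ((edge_adj ..).mpr ⟨Sym2.eq_iff.mp h, hab.ne⟩)
  · exact Or.inl ((toggleEdge_adj_of_ne h).mpr hab)

lemma toggleEdge_le_sup_edge (hne : (ofLex e).1 ≠ (ofLex e).2) :
    toggleEdge G e ≤ G ⊔ edge (ofLex e).1 (ofLex e).2 := by
  simpa only [toggleEdge_toggleEdge hne] using
    le_toggleEdge_sup_edge (G := toggleEdge G e) (e := e)

lemma aboveEdge_le : aboveEdge G e ≤ G := fun _ _ h => h.1

lemma aboveEdge_anti (hfe : f ≤ e) : aboveEdge G e ≤ aboveEdge G f :=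
  fun _ _ h => ⟨h.1, hfe.trans_lt h.2⟩

lemma aboveEdge_le_aboveEdge_sup_edge {s t : Fin n} (hle : G' ≤ G ⊔ edge s t) :
    aboveEdge G' e ≤ aboveEdge G e ⊔ edge s t := by
  rintro a b ⟨hab, hlt⟩
  exact (hle hab).imp (fun h => ⟨h, hlt⟩) id

lemma aboveEdge_toggleEdge_self (hlt : (ofLex e).1 < (ofLex e).2) :
    aboveEdge (toggleEdge G e) e = aboveEdge G e := by
  ext a b
  refine and_congr_left fun hab => toggleEdge_adj_of_ne fun h => hab.ne' ?_
  rw [edgeKey_congr h, edgeKey_ofLex hlt]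

lemma mem_activeEdges : e ∈ activeEdges G ↔ IsActive G e := by
  simp [activeEdges]

lemma IsActive.toggleEdge_self (he : IsActive G e) : IsActive (toggleEdge G e) e :=
  ⟨he.1, by rw [aboveEdge_toggleEdge_self he.1]; exact he.2⟩

lemma IsActive.of_toggleEdge (he : IsActive G e) (hfe : f ≤ e)
    (hf : IsActive (toggleEdge G e) f) : IsActive G f :=
  ⟨hf.1, (he.2.mono (aboveEdge_anti hfe)).of_le_sup_edge_s3
    (aboveEdge_le_aboveEdge_sup_edge (toggleEdge_le_sup_edge he.1.ne)) hf.2⟩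

lemma isLeast_activeEdges_toggleEdge (he : IsLeast (activeEdges G : Set _) e) :
    IsLeast (activeEdges (toggleEdge G e) : Set _) e := by
  have he_act := mem_activeEdges.mp he.1
  refine ⟨mem_activeEdges.mpr he_act.toggleEdge_self, fun f hf => le_of_not_gt fun hfe => ?_⟩
  have hf_act := he_act.of_toggleEdge hfe.le (mem_activeEdges.mp hf)
  exact (he.2 (mem_activeEdges.mpr hf_act)).not_gt hfe

lemma Psi_eq_toggleEdge (he : IsLeast (activeEdges G : Set _) e) : Psi G = toggleEdge G e := by
  have h : (activeEdges G).Nonempty := ⟨e, he.1⟩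
  rw [Psi, dif_pos h, ((activeEdges G).isLeast_min' h).unique he]

lemma Psi_eq_self (h : ¬(activeEdges G).Nonempty) : Psi G = G := dif_neg h

lemma SimpleGraph.Connected.toggleEdge (hG : G.Connected) (he : IsActive G e) :
    (toggleEdge G e).Connected := by
  have hst := he.toggleEdge_self.2.mono aboveEdge_le
  have := hG.nonempty
  exact ⟨fun u v => hst.of_le_sup_edge_s3 le_toggleEdge_sup_edge (hG.preconnected u v)⟩

end

/-- `Ψ` maps connected graphs to connected graphs and is an involution on connected graphs. -/
theorem psi_involution {n : ℕ} (G : SimpleGraph (Fin n)) (hG : G.Connected) :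
    (Psi G).Connected ∧ Psi (Psi G) = G := by
  by_cases h : (activeEdges G).Nonempty
  · have he := (activeEdges G).isLeast_min' h
    have he_act := mem_activeEdges.mp he.1
    rw [Psi_eq_toggleEdge he, Psi_eq_toggleEdge (isLeast_activeEdges_toggleEdge he),
      toggleEdge_toggleEdge he_act.1.ne]
    exact ⟨hG.toggleEdge he_act, rfl⟩
  · rw [Psi_eq_self h, Psi_eq_self h]
    exact ⟨hG, rfl⟩
end

section
/- For a connected graph G on {0,...,n}, let Π_G = {(x_1,...,x_n) ∈ R^n : |x_i - x_j| ≤ 1 for all edges (i,j) of G, with convention x_0 = 0}. Then n! · Vol(Π_G) equals the number of pairs (h,σ) with h ∈ Z^n and σ a permutation of [n] such that π(h,σ) ⊆ Π_G. -/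
open scoped Classical
open MeasureTheory

noncomputable section

/-- Extension of a vector `(x_1, …, x_n)` to `(x_0, x_1, …, x_n)` with `x_0 = 0`. -/
def extv {α : Type*} [Zero α] {n : ℕ} (x : Fin n → α) : Fin (n + 1) → α :=
  Fin.cases 0 x

/-- The polytope `Π_G = {(x_1,…,x_n) : x_0 = 0 and |x_i - x_j| ≤ 1 for all edges (i,j) of G}`
associated with a graph `G` on `{0, …, n}`. -/
def PiG (n : ℕ) (G : SimpleGraph (Fin (n + 1))) : Set (Fin n → ℝ) :=
  {x | ∀ i j : Fin (n + 1), G.Adj i j → |extv x i - extv x j| ≤ 1}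

/-- The polytope `π(h, σ)`: the closure of the set of points `(x_1, …, x_n)` whose integer
parts are prescribed by `h` and whose fractional parts are positive and increase in the
order prescribed by `σ`. -/
def piPoly (n : ℕ) (h : Fin n → ℤ) (σ : Equiv.Perm (Fin n)) : Set (Fin n → ℝ) :=
  closure {x : Fin n → ℝ | (∀ i, ⌊x i⌋ = h i) ∧ (∀ k, 0 < Int.fract (x (σ⁻¹ k))) ∧
    StrictMono fun k => Int.fract (x (σ⁻¹ k))}

/-- The centroid `h̄` of `h ∈ ℤ^n`: `h̄_i = h_i + i/(n+1)`, with the convention `h_0 = 0`. -/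
def cent (n : ℕ) (h : Fin n → ℤ) : Fin (n + 1) → ℝ :=
  fun i => (extv h i : ℤ) + (i : ℝ) / (n + 1)

/-- The graph `G_h` on `{0, …, n}` whose edges are the pairs `(i,j)` with `|h̄_i - h̄_j| < 1`. -/
def Gh (n : ℕ) (h : Fin n → ℤ) : SimpleGraph (Fin (n + 1)) where
  Adj i j := i ≠ j ∧ |cent n h i - cent n h j| < 1
  symm := ⟨fun i j hij => ⟨hij.1.symm, by rw [abs_sub_comm]; exact hij.2⟩⟩
  loopless := ⟨fun i hi => hi.1 rfl⟩

end

/-!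
Off a null set (a fractional part equal to `0`, or two equal fractional parts), `ℝⁿ` is the
disjoint union of the open cells `piCell h σ`. They are translates and coordinate permutations
of one another, so all have the same volume, which is `1/n!` because the `n!` cells with `h = 0`
tile the unit cube. On a cell every difference `x_i - x_j` (with `x_0 = 0`) is a non-integer
whose floor depends only on `(h, σ)`, and for a non-integer `t` whether `|t| ≤ 1` depends only on
`⌊t⌋`. So `Π_G` contains every cell it meets and is, up to a null set, the union of these cells;
connectivity of `G` makes `Π_G` bounded, so there are finitely many of them.
-/

open Set Function

@[simp] theorem extv_zero {α : Type*} [Zero α] {n : ℕ} (x : Fin n → α) : extv x 0 = 0 := rfl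

@[simp] theorem extv_succ {α : Type*} [Zero α] {n : ℕ} (x : Fin n → α) (i : Fin n) :
    extv x i.succ = x i := rfl

section FloorRing

variable {k : Type*} [Field k] [LinearOrder k] [IsStrictOrderedRing k] [FloorRing k]

theorem Int.floor_sub_eq_ite (a b : k) :
    ⌊a - b⌋ = ⌊a⌋ - ⌊b⌋ - if Int.fract a < Int.fract b then 1 else 0 := by
  rw [Int.floor_eq_iff]
  have ha := Int.floor_add_fract a
  have hb := Int.floor_add_fract b
  have := Int.fract_nonneg a; have := Int.fract_nonneg b
  have := Int.fract_lt_one a; have := Int.fract_lt_one b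
  split_ifs <;> push_cast <;> constructor <;> linarith

theorem Int.floor_sub_eq_floor_sub {a b c d : k} (hac : ⌊a⌋ = ⌊c⌋) (hbd : ⌊b⌋ = ⌊d⌋)
    (hlt : Int.fract a < Int.fract b ↔ Int.fract c < Int.fract d) : ⌊a - b⌋ = ⌊c - d⌋ := by
  simp only [Int.floor_sub_eq_ite, hac, hbd, hlt]

theorem abs_le_one_of_floor_eq {s t : k} (hs : Int.fract s ≠ 0) (hst : ⌊s⌋ = ⌊t⌋)
    (h : |s| ≤ 1) : |t| ≤ 1 := by
  rw [abs_le] at h ⊢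
  have hs1 : s < 1 := h.2.lt_of_ne (by rintro rfl; simp at hs)
  have hlo : (-1 : k) ≤ ⌊t⌋ := by exact_mod_cast hst ▸ Int.le_floor.2 (by push_cast; linarith)
  have hhi : (⌊t⌋ : k) ≤ 0 := by
    exact_mod_cast Int.lt_add_one_iff.1 (hst ▸ Int.floor_lt.2 (by push_cast; linarith))
  constructor <;> linarith [Int.floor_le t, Int.lt_floor_add_one t]

end FloorRing

theorem ae_fract_ne_zero {E : Type*} [NormedAddCommGroup E] [NormedSpace ℝ E]
    [MeasurableSpace E] [BorelSpace E] [FiniteDimensional ℝ E] (μ : Measure E)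
    [μ.IsAddHaarMeasure] {f : E →ₗ[ℝ] ℝ} (hf : f ≠ 0) : ∀ᵐ x ∂μ, Int.fract (f x) ≠ 0 := by
  have hlevel (c : ℝ) : μ (f ⁻¹' {c}) = 0 := by
    let s := (AffineSubspace.mk' c ⊥).comap f.toAffineMap
    have hs : (s : Set E) = f ⁻¹' {c} := by ext x; simp [s, AffineSubspace.mem_mk', sub_eq_zero]
    rw [← hs]
    refine Measure.addHaar_affineSubspace μ s fun htop => hf ?_
    have hc (x : E) : f x = c := by
      have hx : x ∈ (s : Set E) := by rw [htop]; trivial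
      simpa [hs] using hx
    ext x
    rw [LinearMap.zero_apply, hc x, ← hc 0, map_zero]
  rw [ae_iff]
  refine measure_mono_null (fun x hx => ?_) (measure_iUnion_null fun m : ℤ => hlevel m)
  obtain ⟨m, hm⟩ := Int.fract_eq_zero_iff.1 (not_not.1 hx)
  exact mem_iUnion.2 ⟨m, hm.symm⟩

section Cells

variable {n : ℕ}

def piCell (h : Fin n → ℤ) (σ : Equiv.Perm (Fin n)) : Set (Fin n → ℝ) :=
  {x | (∀ i, ⌊x i⌋ = h i) ∧ (∀ k, 0 < Int.fract (x (σ⁻¹ k))) ∧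
    StrictMono fun k => Int.fract (x (σ⁻¹ k))}

theorem piPoly_eq_closure_piCell (h : Fin n → ℤ) (σ : Equiv.Perm (Fin n)) :
    piPoly n h σ = closure (piCell h σ) := rfl

variable {h : Fin n → ℤ} {σ : Equiv.Perm (Fin n)} {x y : Fin n → ℝ}

theorem fract_pos_of_mem_piCell (hx : x ∈ piCell h σ) (i : Fin n) : 0 < Int.fract (x i) := by
  simpa using hx.2.1 (σ i)

theorem fract_lt_fract_iff_of_mem_piCell (hx : x ∈ piCell h σ) {i j : Fin n} :
    Int.fract (x i) < Int.fract (x j) ↔ σ i < σ j := by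
  simpa using hx.2.2.lt_iff_lt (a := σ i) (b := σ j)

theorem inv_eq_sort_of_mem_piCell (hx : x ∈ piCell h σ) :
    σ⁻¹ = Tuple.sort fun i => Int.fract (x i) :=
  Tuple.eq_sort_iff.2 ⟨hx.2.2.monotone, fun _ _ hij heq => absurd heq (hx.2.2 hij).ne⟩

theorem mem_piCell_sort (hpos : ∀ i, Int.fract (x i) ≠ 0)
    (hinj : Injective fun i => Int.fract (x i)) :
    x ∈ piCell (fun i => ⌊x i⌋) (Tuple.sort fun i => Int.fract (x i))⁻¹ := by
  refine ⟨fun _ => rfl, fun k => (Int.fract_nonneg _).lt_of_ne' (hpos _), ?_⟩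
  rw [inv_inv]
  exact (Tuple.monotone_sort _).strictMono_of_injective (hinj.comp (Equiv.injective _))

theorem pairwise_disjoint_piCell :
    Pairwise fun p q : (Fin n → ℤ) × Equiv.Perm (Fin n) =>
      Disjoint (piCell p.1 p.2) (piCell q.1 q.2) := by
  refine fun p q hpq => disjoint_left.2 fun x hp hq => hpq (Prod.ext ?_ ?_)
  · exact funext fun i => (hp.1 i).symm.trans (hq.1 i)
  · exact inv_injective ((inv_eq_sort_of_mem_piCell hp).trans (inv_eq_sort_of_mem_piCell hq).symm)

theorem measurableSet_piCell (h : Fin n → ℤ) (σ : Equiv.Perm (Fin n)) :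
    MeasurableSet (piCell h σ) := by
  simp only [piCell, StrictMono, ofPred_and, ofPred_forall]
  measurability

theorem ae_fract_ne_zero_apply (i : Fin n) : ∀ᵐ x : Fin n → ℝ, Int.fract (x i) ≠ 0 := by
  let f : (Fin n → ℝ) →ₗ[ℝ] ℝ := LinearMap.proj i
  have hf : f ≠ 0 := fun h0 => by simpa [f] using LinearMap.congr_fun h0 (Pi.single i 1)
  exact ae_fract_ne_zero volume hf

theorem ae_fract_sub_ne_zero {i j : Fin n} (hij : i ≠ j) :
    ∀ᵐ x : Fin n → ℝ, Int.fract (x i - x j) ≠ 0 := by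
  let f : (Fin n → ℝ) →ₗ[ℝ] ℝ := .proj i - .proj j
  have hf : f ≠ 0 := fun h0 => by
    simpa [f, Pi.single_apply, hij.symm] using LinearMap.congr_fun h0 (Pi.single i 1)
  exact ae_fract_ne_zero volume hf

theorem ae_exists_mem_piCell :
    ∀ᵐ x : Fin n → ℝ, ∃ p : (Fin n → ℤ) × Equiv.Perm (Fin n), x ∈ piCell p.1 p.2 := by
  have hsub : ∀ᵐ x : Fin n → ℝ, ∀ i j, i ≠ j → Int.fract (x i - x j) ≠ 0 :=
    ae_all_iff.2 fun i => ae_all_iff.2 fun j => by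
      by_cases hij : i = j
      · exact Filter.Eventually.of_forall fun _ h => absurd hij h
      · exact (ae_fract_sub_ne_zero hij).mono fun _ h _ => h
  filter_upwards [ae_all_iff.2 ae_fract_ne_zero_apply, hsub] with x hpos hsub
  refine ⟨(_, _), mem_piCell_sort hpos fun i j hfij => by_contra fun hij => hsub i j hij ?_⟩
  obtain ⟨m, hm⟩ := Int.fract_eq_fract.1 hfij
  simp [hm]

theorem floor_extv_of_mem_piCell (hx : x ∈ piCell h σ) (i : Fin (n + 1)) :
    ⌊extv x i⌋ = extv h i := by
  cases i using Fin.cases <;> simp [hx.1]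

theorem fract_extv_lt_iff_of_mem_piCell (hx : x ∈ piCell h σ) (hy : y ∈ piCell h σ)
    (i j : Fin (n + 1)) :
    Int.fract (extv x i) < Int.fract (extv x j) ↔ Int.fract (extv y i) < Int.fract (extv y j) := by
  cases i using Fin.cases <;> cases j using Fin.cases <;>
    simp [fract_pos_of_mem_piCell hx, fract_pos_of_mem_piCell hy, not_lt.2 (Int.fract_nonneg _),
      fract_lt_fract_iff_of_mem_piCell hx, fract_lt_fract_iff_of_mem_piCell hy]

theorem injective_fract_extv_of_mem_piCell (hx : x ∈ piCell h σ) :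
    Injective fun i => Int.fract (extv x i) := by
  intro i j hij
  cases i using Fin.cases <;> cases j using Fin.cases <;>
    simp only [extv_zero, extv_succ, Int.fract_zero] at hij
  · rfl
  · exact absurd hij (fract_pos_of_mem_piCell hx _).ne
  · exact absurd hij (fract_pos_of_mem_piCell hx _).ne'
  · exact congrArg Fin.succ (σ.injective (hx.2.2.injective (by simpa using hij)))

theorem piCell_eq_preimage_add (h : Fin n → ℤ) (σ : Equiv.Perm (Fin n)) :
    piCell h σ = (· + fun i => -(h i : ℝ)) ⁻¹' piCell 0 σ := by
  ext x
  simp only [piCell, mem_preimage, mem_ofPred_eq, Pi.add_apply, ← sub_eq_add_neg,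
    Int.floor_sub_intCast, Int.fract_sub_intCast, Pi.zero_apply, sub_eq_zero]

theorem piCell_eq_preimage_piCongrLeft (σ : Equiv.Perm (Fin n)) :
    piCell 0 σ = MeasurableEquiv.piCongrLeft (fun _ => ℝ) σ ⁻¹' piCell 0 1 := by
  ext x
  have hσ (k : Fin n) : MeasurableEquiv.piCongrLeft (fun _ => ℝ) σ x k = x (σ⁻¹ k) := by
    simp [MeasurableEquiv.coe_piCongrLeft, Equiv.piCongrLeft_apply_eq_cast]
  simp only [piCell, mem_preimage, mem_ofPred_eq, hσ, inv_one, Equiv.Perm.coe_one, id_eq,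
    Pi.zero_apply]
  exact and_congr_left' σ⁻¹.forall_congr_right.symm

theorem volume_piCell (h : Fin n → ℤ) (σ : Equiv.Perm (Fin n)) :
    volume (piCell h σ) = volume (piCell (0 : Fin n → ℤ) 1) := by
  rw [piCell_eq_preimage_add, measure_preimage_add_right, piCell_eq_preimage_piCongrLeft]
  exact (volume_measurePreserving_piCongrLeft (fun _ => ℝ) σ).measure_preimage_equiv _

theorem volume_eq_encard_mul_volume_piCell {A : Set (Fin n → ℝ)}
    {T : Set ((Fin n → ℤ) × Equiv.Perm (Fin n))} (hsub : ∀ p ∈ T, piCell p.1 p.2 ⊆ A)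
    (hmem : ∀ p, (A ∩ piCell p.1 p.2).Nonempty → p ∈ T) :
    volume A = T.encard * volume (piCell (0 : Fin n → ℤ) 1) := by
  have hunion :
      volume (⋃ p ∈ T, piCell p.1 p.2) = T.encard * volume (piCell (0 : Fin n → ℤ) 1) := by
    rw [measure_biUnion T.to_countable (pairwise_disjoint_piCell.set_pairwise T)
      fun p _ => measurableSet_piCell _ _]
    simp_rw [volume_piCell]
    rw [ENNReal.tsum_const]
    rfl
  rw [← hunion]
  refine le_antisymm (measure_mono_ae ?_) (measure_mono (iUnion₂_subset hsub))
  filter_upwards [ae_exists_mem_piCell] with x ⟨p, hp⟩ hxA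
  exact mem_biUnion (hmem p ⟨x, hxA, hp⟩) hp

theorem factorial_mul_volume_piCell :
    (n.factorial : ENNReal) * volume (piCell (0 : Fin n → ℤ) 1) = 1 := by
  have hcube := volume_eq_encard_mul_volume_piCell (A := univ.pi fun _ : Fin n => Ico (0 : ℝ) 1)
    (T := {0} ×ˢ univ) ?_ ?_
  · simpa [volume_pi_pi, Set.encard_prod, ENat.card_eq_coe_fintype_card, Fintype.card_perm]
      using hcube.symm
  · rintro ⟨h, σ⟩ ⟨rfl, -⟩ x hx i -
    exact Int.floor_eq_zero_iff.1 (hx.1 i)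
  · rintro ⟨h, σ⟩ ⟨x, hxA, hx⟩
    exact ⟨funext fun i => (hx.1 i).symm.trans (Int.floor_eq_zero_iff.2 (hxA i trivial)), trivial⟩

end Cells

section PiG

variable {n : ℕ} {G : SimpleGraph (Fin (n + 1))} {h : Fin n → ℤ} {σ : Equiv.Perm (Fin n)}
  {x : Fin n → ℝ}

theorem isClosed_PiG (G : SimpleGraph (Fin (n + 1))) : IsClosed (PiG n G) := by
  have hcont (i : Fin (n + 1)) : Continuous fun x : Fin n → ℝ => extv x i := by
    cases i using Fin.cases <;> simp only [extv_zero, extv_succ] <;> fun_prop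
  simp only [PiG, ofPred_forall]
  exact isClosed_iInter fun i => isClosed_iInter fun j => isClosed_iInter fun _ =>
    isClosed_le ((hcont i).sub (hcont j)).abs continuous_const

theorem piCell_subset_PiG_of_mem (hx : x ∈ piCell h σ) (hxG : x ∈ PiG n G) :
    piCell h σ ⊆ PiG n G := by
  intro y hy i j hij
  have hfloor : ⌊extv x i - extv x j⌋ = ⌊extv y i - extv y j⌋ :=
    Int.floor_sub_eq_floor_sub
      (by rw [floor_extv_of_mem_piCell hx, floor_extv_of_mem_piCell hy])
      (by rw [floor_extv_of_mem_piCell hx, floor_extv_of_mem_piCell hy])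
      (fract_extv_lt_iff_of_mem_piCell hx hy i j)
  have hfract : Int.fract (extv x i - extv x j) ≠ 0 := fun h0 => hij.ne <|
    injective_fract_extv_of_mem_piCell hx <| Int.fract_eq_fract.2 <| by
      simpa [eq_comm] using Int.fract_eq_zero_iff.1 h0
  exact abs_le_one_of_floor_eq hfract hfloor (hxG i j hij)

theorem abs_extv_sub_le_length_of_mem_PiG (hx : x ∈ PiG n G) {a b : Fin (n + 1)}
    (w : G.Walk a b) : |extv x a - extv x b| ≤ w.length := by
  induction w with
  | nil => simp
  | @cons u v w hadj _ ih =>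
    rw [SimpleGraph.Walk.length_cons, Nat.cast_succ]
    linarith [abs_sub_le (extv x u) (extv x v) (extv x w), hx u v hadj]

theorem PiG_subset_closedBall (hG : G.Connected) : PiG n G ⊆ Metric.closedBall 0 n := by
  intro x hx
  rw [mem_closedBall_zero_iff, pi_norm_le_iff_of_nonneg n.cast_nonneg]
  intro i
  obtain ⟨p, hp⟩ := (hG.preconnected 0 i.succ).some.toPath
  have hlen : p.length ≤ n := Nat.lt_succ_iff.1 (by simpa using hp.length_lt)
  simpa using (abs_extv_sub_le_length_of_mem_PiG hx p).trans (by exact_mod_cast hlen)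

end PiG

/-- For a connected graph `G` on `{0, …, n}`, `n! · Vol(Π_G)` counts the pairs `(h, σ)`
with `h ∈ ℤ^n`, `σ ∈ 𝔖_n` such that `π(h, σ) ⊆ Π_G`. -/
theorem volume_PiG_eq_card_subpolytopes (n : ℕ) (G : SimpleGraph (Fin (n + 1)))
    (hG : G.Connected) :
    (n.factorial : ENNReal) * MeasureTheory.volume (PiG n G)
      = Set.ncard {p : (Fin n → ℤ) × Equiv.Perm (Fin n) | piPoly n p.1 p.2 ⊆ PiG n G} := by
  set T := {p : (Fin n → ℤ) × Equiv.Perm (Fin n) | piPoly n p.1 p.2 ⊆ PiG n G}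
  have hT : T = {p | piCell p.1 p.2 ⊆ PiG n G} := by
    simp only [T, piPoly_eq_closure_piCell, (isClosed_PiG G).closure_subset_iff]
  have hcount : (n.factorial : ENNReal) * volume (PiG n G) = T.encard := by
    rw [volume_eq_encard_mul_volume_piCell (T := T) (by rw [hT]; exact fun _ => id)
      (fun p ⟨x, hxG, hx⟩ => hT ▸ piCell_subset_PiG_of_mem hx hxG),
      mul_left_comm, factorial_mul_volume_piCell, mul_one]
  have hfin : T.Finite := by
    rw [← Set.encard_lt_top_iff, ← ENat.toENNReal_lt_top, ← hcount]
    exact ENNReal.mul_lt_top (ENNReal.natCast_lt_top _)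
      (measure_closedBall_lt_top.trans_le' (measure_mono (PiG_subset_closedBall hG)))
  rw [hcount, ← hfin.cast_ncard_eq, ENat.toENNReal_coe]
end

section
/- Fix h ∈ Z^n with centroid h̄ as above and graph G_h. Order the edges (i,j) of G_h by the lexicographic order on the pairs (min(h̄_i,h̄_j), max(h̄_i,h̄_j)). For G ⊆ G_h connected and edge e=(i,j) of G_h, say e is (G,h)-active if i and j are joined by a path in the set of edges of G strictly greater than e; define Ψ_h(G) = G if no (G,h)-active edge exists, else Ψ_h(G) = G ⊕ e*_{G,h} for the least active edge e*_{G,h}. Then Ψ_h is an involution on the set of connected spanning subgraphs of G_h. -/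
open scoped Classical
open MeasureTheory

noncomputable section

/-- The key of the pair `(i, j)`: the pair `(min(h̄_i, h̄_j), max(h̄_i, h̄_j))` with the
lexicographic order, along which edges of `G_h` are ordered. -/
def keyC (n : ℕ) (h : Fin n → ℤ) (p : Fin (n + 1) × Fin (n + 1)) : ℝ ×ₗ ℝ :=
  toLex (min (cent n h p.1) (cent n h p.2), max (cent n h p.1) (cent n h p.2))

/-- The subgraph of `G` consisting of the edges strictly greater than `e`. -/
def aboveC (n : ℕ) (h : Fin n → ℤ) (G : SimpleGraph (Fin (n + 1)))
    (e : Fin (n + 1) × Fin (n + 1)) : SimpleGraph (Fin (n + 1)) where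
  Adj a b := G.Adj a b ∧ keyC n h e < keyC n h (a, b)
  symm := by
    constructor
    intro a b hab
    refine ⟨hab.1.symm, ?_⟩
    have hk : keyC n h (a, b) = keyC n h (b, a) := by
      simp only [keyC]; rw [min_comm (cent n h a), max_comm (cent n h a)]
    rw [← hk]; exact hab.2
  loopless := ⟨fun a ha => G.loopless.irrefl a ha.1⟩

/-- An edge `e = (i, j)` of `G_h` (normalized so that `h̄_i < h̄_j`) is `(G, h)`-active if
`i` and `j` are joined by a path among the edges of `G` strictly greater than `e`. -/
def IsActiveC (n : ℕ) (h : Fin n → ℤ) (G : SimpleGraph (Fin (n + 1)))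
    (e : Fin (n + 1) × Fin (n + 1)) : Prop :=
  cent n h e.1 < cent n h e.2 ∧ (Gh n h).Adj e.1 e.2 ∧ (aboveC n h G e).Reachable e.1 e.2

/-- The finset of `(G, h)`-active edges. -/
def activeC (n : ℕ) (h : Fin n → ℤ) (G : SimpleGraph (Fin (n + 1))) :
    Finset (Fin (n + 1) × Fin (n + 1)) :=
  Finset.univ.filter (IsActiveC n h G)

/-- `G ⊕ e`: toggle the edge `e` (delete it if present, add it otherwise). -/
def toggleC {n : ℕ} (G : SimpleGraph (Fin (n + 1))) (e : Fin (n + 1) × Fin (n + 1)) :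
    SimpleGraph (Fin (n + 1)) :=
  if G.Adj e.1 e.2 then G.deleteEdges {s(e.1, e.2)}
  else G ⊔ SimpleGraph.fromEdgeSet {s(e.1, e.2)}

/-- The map `Ψ_h`: toggle the least `(G, h)`-active edge, if any. -/
def PsiH (n : ℕ) (h : Fin n → ℤ) (G : SimpleGraph (Fin (n + 1))) :
    SimpleGraph (Fin (n + 1)) :=
  if hne : (activeC n h G).Nonempty then
    toggleC G (Finset.exists_min_image (activeC n h G) (keyC n h) hne).choose
  else G

/-- The index `i_0` of the least coordinate of the centroid `h̄`. -/
def idxMin (n : ℕ) (h : Fin n → ℤ) : Fin (n + 1) :=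
  (Finite.exists_min (cent n h)).choose

/-- An `h`-increasing tree on `{0, …, n}`: a spanning tree of `G_h` such that `h̄` strictly
increases along every simple path starting at the vertex `i_0` minimizing `h̄`. -/
def IsIncTree (n : ℕ) (h : Fin n → ℤ) (T : SimpleGraph (Fin (n + 1))) : Prop :=
  T.IsTree ∧ T ≤ Gh n h ∧
    ∀ (v : Fin (n + 1)) (p : T.Walk (idxMin n h) v), p.IsPath →
      List.Chain' (fun a b => cent n h a < cent n h b) p.support

end

/-!
Toggling an active edge `e` does not change the set of active edges. Edges above `e` are
untouched, so activity of `e` and of every larger edge is unaffected; for an edge `f` below `e`,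
a path above `f` that used (or now uses) `e` can be rerouted through the path above `e` joining
its endpoints, which avoids `e` and lies above `f`. Hence `Ψ_h(G ⊕ e)` toggles the same least
active edge `e` again and returns `G`. Connectedness survives because the endpoints of an active
edge are joined without using that edge, so `e` is never a bridge.
-/

theorem SimpleGraph.Reachable.of_forall_adj {V : Type*} {A B : SimpleGraph V}
    (hAB : ∀ ⦃a b⦄, A.Adj a b → B.Reachable a b) {x y : V} (hxy : A.Reachable x y) :
    B.Reachable x y := by
  rw [SimpleGraph.reachable_iff_reflTransGen] at hxy ⊢
  exact Relation.reflTransGen_closed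
    (fun a b hab => (SimpleGraph.reachable_iff_reflTransGen a b).mp (hAB hab)) x y hxy

section

open SimpleGraph

variable {n : ℕ} {h : Fin n → ℤ}

theorem cent_injective : Function.Injective (cent n h) := by
  have hfract (k : Fin (n + 1)) : Int.fract (cent n h k) = k / (n + 1) := by
    rw [cent, Int.fract_intCast_add, Int.fract_eq_self]
    exact ⟨by positivity, (div_lt_one (by positivity)).mpr (by exact_mod_cast k.isLt)⟩
  intro i j hij
  have hij' := congrArg Int.fract hij
  rw [hfract, hfract, div_left_inj' (by positivity)] at hij'
  exact Fin.ext (by exact_mod_cast hij')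

theorem keyC_swap (a b : Fin (n + 1)) : keyC n h (a, b) = keyC n h (b, a) := by
  simp only [keyC, min_comm (cent n h a), max_comm (cent n h a)]

theorem keyC_eq_of_sym2_eq {a b c d : Fin (n + 1)} (hs : s(a, b) = s(c, d)) :
    keyC n h (a, b) = keyC n h (c, d) := by
  rcases Sym2.eq_iff.mp hs with ⟨rfl, rfl⟩ | ⟨rfl, rfl⟩
  · rfl
  · exact keyC_swap a b

theorem eq_of_keyC_eq {p q : Fin (n + 1) × Fin (n + 1)}
    (hp : cent n h p.1 < cent n h p.2) (hq : cent n h q.1 < cent n h q.2)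
    (hk : keyC n h p = keyC n h q) : p = q := by
  simp only [keyC, toLex_inj, Prod.mk.injEq] at hk
  rw [min_eq_left hp.le, min_eq_left hq.le, max_eq_right hp.le, max_eq_right hq.le] at hk
  exact Prod.ext (cent_injective hk.1) (cent_injective hk.2)

section Toggle

variable {G H : SimpleGraph (Fin (n + 1))} {e : Fin (n + 1) × Fin (n + 1)} {a b : Fin (n + 1)}

theorem toggleC_adj_of_ne (hs : s(a, b) ≠ s(e.1, e.2)) : (toggleC G e).Adj a b ↔ G.Adj a b := by
  unfold toggleC
  split_ifs <;> simp [hs]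

theorem toggleC_adj_of_eq (he : e.1 ≠ e.2) (hs : s(a, b) = s(e.1, e.2)) :
    (toggleC G e).Adj a b ↔ ¬ G.Adj a b := by
  rw [G.adj_congr_of_sym2 hs, (toggleC G e).adj_congr_of_sym2 hs]
  unfold toggleC
  split_ifs <;> simp_all

theorem toggleC_toggleC (he : e.1 ≠ e.2) : toggleC (toggleC G e) e = G := by
  ext a b
  by_cases hs : s(a, b) = s(e.1, e.2)
  · rw [toggleC_adj_of_eq he hs, toggleC_adj_of_eq he hs, not_not]
  · rw [toggleC_adj_of_ne hs, toggleC_adj_of_ne hs]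

theorem toggleC_le (hG : G ≤ H) (he : H.Adj e.1 e.2) : toggleC G e ≤ H := by
  intro a b hab
  by_cases hs : s(a, b) = s(e.1, e.2)
  · exact (H.adj_congr_of_sym2 hs).mpr he
  · exact hG ((toggleC_adj_of_ne hs).mp hab)

theorem deleteEdges_le_toggleC : G.deleteEdges {s(e.1, e.2)} ≤ toggleC G e := by
  intro a b hab
  rw [deleteEdges_adj, Set.mem_singleton_iff] at hab
  exact (toggleC_adj_of_ne hab.2).mpr hab.1

theorem SimpleGraph.Connected.toggleC (hG : G.Connected)
    (hr : (G.deleteEdges {s(e.1, e.2)}).Reachable e.1 e.2) : (toggleC G e).Connected :=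
  (hG.connected_delete_edge_of_not_isBridge (not_not.mpr hr)).mono deleteEdges_le_toggleC

end Toggle

section Above

variable {G : SimpleGraph (Fin (n + 1))} {e f : Fin (n + 1) × Fin (n + 1)}

theorem aboveC_anti (hfe : keyC n h f ≤ keyC n h e) : aboveC n h G e ≤ aboveC n h G f :=
  fun _ _ hab => ⟨hab.1, hfe.trans_lt hab.2⟩

theorem aboveC_le_deleteEdges : aboveC n h G e ≤ G.deleteEdges {s(e.1, e.2)} := by
  intro a b hab
  rw [deleteEdges_adj, Set.mem_singleton_iff]
  exact ⟨hab.1, fun hs => hab.2.ne (keyC_eq_of_sym2_eq hs).symm⟩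

theorem aboveC_toggleC (hef : keyC n h e ≤ keyC n h f) :
    aboveC n h (toggleC G e) f = aboveC n h G f := by
  ext a b
  refine and_congr_left fun hab => toggleC_adj_of_ne fun hs => ?_
  exact (hef.trans_lt hab).ne (keyC_eq_of_sym2_eq hs).symm

theorem IsActiveC.ne (he : IsActiveC n h G e) : e.1 ≠ e.2 :=
  fun he' => he.1.ne (congrArg (cent n h) he')

theorem isActiveC_toggleC_iff_of_le (hef : keyC n h e ≤ keyC n h f) :
    IsActiveC n h (toggleC G e) f ↔ IsActiveC n h G f := by
  simp only [IsActiveC, aboveC_toggleC hef]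

theorem IsActiveC.toggleC_of_lt (he : IsActiveC n h G e) (hfe : keyC n h f < keyC n h e)
    (hf : IsActiveC n h G f) : IsActiveC n h (toggleC G e) f := by
  refine ⟨hf.1, hf.2.1, hf.2.2.of_forall_adj fun a b hab => ?_⟩
  by_cases hs : s(a, b) = s(e.1, e.2)
  · have hr : (aboveC n h (toggleC G e) f).Reachable e.1 e.2 :=
      (he.2.2.mono (aboveC_toggleC le_rfl).ge).mono (aboveC_anti hfe.le)
    rcases Sym2.eq_iff.mp hs with ⟨rfl, rfl⟩ | ⟨rfl, rfl⟩
    · exact hr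
    · exact hr.symm
  · exact Adj.reachable ⟨(toggleC_adj_of_ne hs).mpr hab.1, hab.2⟩

theorem IsActiveC.isActiveC_toggleC_iff (he : IsActiveC n h G e) :
    IsActiveC n h (toggleC G e) f ↔ IsActiveC n h G f := by
  rcases le_or_gt (keyC n h e) (keyC n h f) with hef | hfe
  · exact isActiveC_toggleC_iff_of_le hef
  · have he' : IsActiveC n h (toggleC G e) e := (isActiveC_toggleC_iff_of_le le_rfl).mpr he
    refine ⟨fun hf => ?_, he.toggleC_of_lt hfe⟩
    simpa only [toggleC_toggleC he.ne] using he'.toggleC_of_lt hfe hf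

theorem IsActiveC.activeC_toggleC (he : IsActiveC n h G e) :
    activeC n h (toggleC G e) = activeC n h G := by
  ext f
  simp only [activeC, Finset.mem_filter, Finset.mem_univ, true_and, he.isActiveC_toggleC_iff]

theorem psiH_eq_toggleC (he : e ∈ activeC n h G)
    (hmin : ∀ f ∈ activeC n h G, keyC n h e ≤ keyC n h f) : PsiH n h G = toggleC G e := by
  have hne : (activeC n h G).Nonempty := ⟨e, he⟩
  obtain ⟨hmem, hle⟩ := (Finset.exists_min_image (activeC n h G) (keyC n h) hne).choose_spec
  rw [PsiH, dif_pos hne, eq_of_keyC_eq (Finset.mem_filter.mp hmem).2.1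
    (Finset.mem_filter.mp he).2.1 ((hle e he).antisymm (hmin _ hmem))]

end Above

end

/-- `Ψ_h` is an involution on the set of connected spanning subgraphs of `G_h`. -/
theorem psiH_involution (n : ℕ) (h : Fin n → ℤ) (G : SimpleGraph (Fin (n + 1)))
    (hG1 : G ≤ Gh n h) (hG2 : G.Connected) :
    PsiH n h G ≤ Gh n h ∧ (PsiH n h G).Connected ∧ PsiH n h (PsiH n h G) = G := by
  by_cases hne : (activeC n h G).Nonempty
  · obtain ⟨e, he, hmin⟩ := Finset.exists_min_image (activeC n h G) (keyC n h) hne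
    have he' : IsActiveC n h G e := (Finset.mem_filter.mp he).2
    rw [psiH_eq_toggleC he hmin]
    refine ⟨toggleC_le hG1 he'.2.1, hG2.toggleC (he'.2.2.mono aboveC_le_deleteEdges), ?_⟩
    rw [← he'.activeC_toggleC] at he hmin
    rw [psiH_eq_toggleC he hmin, toggleC_toggleC he'.ne]
  · have hψ : PsiH n h G = G := dif_neg hne
    rw [hψ, hψ]
    exact ⟨hG1, hG2, rfl⟩
end
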